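/- arXiv:1910.10055 — 2 statements merged into one kernel-verified Lean document; each statement's English description precedes it below -/
import Mathlib

section
/- Let A = [[1,2],[0,1]] and G = [[a,b],[c,d]] ∈ SL(2,ℝ) with c ≠ 0 and |a+d| ≥ 2. If (|a+d| + 2)/|c| < 2, then |(a+d)| - |2c| ≤ -2, and hence for all n ∈ ℤ, |Tr(AⁿG)| = |(a+d) + 2cn| ≥ 2; i.e., no product AⁿG is elliptic. -/
open Matrix

lemma pow_coe_aux (A : Matrix.SpecialLinearGroup (Fin 2) ℝ)
    (hA : (A : Matrix (Fin 2) (Fin 2) ℝ) = !![1, 2; 0, 1]) (n : ℤ) :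
    ((A ^ n : Matrix.SpecialLinearGroup (Fin 2) ℝ) : Matrix (Fin 2) (Fin 2) ℝ)
      = !![1, 2 * (n : ℝ); 0, 1] := by
  have hAinv : ((A⁻¹ : Matrix.SpecialLinearGroup (Fin 2) ℝ) : Matrix (Fin 2) (Fin 2) ℝ)
      = !![1, -2; 0, 1] := by
    rw [Matrix.SpecialLinearGroup.coe_inv, hA, Matrix.adjugate_fin_two]
    norm_num
  induction n using Int.induction_on with
  | zero => simp [Matrix.one_fin_two]
  | succ k ih =>
    have : A ^ ((k : ℤ) + 1) = A ^ (k : ℤ) * A := by rw [_root_.zpow_add_one]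
    rw [this, Matrix.SpecialLinearGroup.coe_mul, ih, hA]
    push_cast
    ext i j
    fin_cases i <;> fin_cases j <;>
      simp [Matrix.mul_apply, Fin.sum_univ_succ] <;> ring
  | pred k ih =>
    have : A ^ (-(k : ℤ) - 1) = A ^ (-(k : ℤ)) * A⁻¹ := by rw [_root_.zpow_sub_one]
    rw [this, Matrix.SpecialLinearGroup.coe_mul, ih, hAinv]
    push_cast
    ext i j
    fin_cases i <;> fin_cases j <;>
      simp [Matrix.mul_apply, Fin.sum_univ_succ] <;> ring

/-- Lemma 4.1(ii)-type statement: if the outer Ford-distance `(|Tr G| + 2)/|c|` of a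
non-elliptic `G` is less than `2` (the translation length of `A`), then
`|Tr G| - |2c| ≤ -2` and no product `AⁿG` is elliptic. -/
theorem stmt9 (a b c d : ℝ) (hdet : a * d - b * c = 1) (hc : c ≠ 0)
    (hG : abs (a + d) ≥ 2) (hFord : (abs (a + d) + 2) / abs c < 2)
    (A G : Matrix.SpecialLinearGroup (Fin 2) ℝ)
    (hA : (A : Matrix (Fin 2) (Fin 2) ℝ) = !![1, 2; 0, 1])
    (hGdef : (G : Matrix (Fin 2) (Fin 2) ℝ) = !![a, b; c, d]) :
    abs (a + d) - abs (2 * c) ≤ -2 ∧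
    ∀ n : ℤ,
      Matrix.trace ((A ^ n * G : Matrix.SpecialLinearGroup (Fin 2) ℝ) :
        Matrix (Fin 2) (Fin 2) ℝ) = (a + d) + 2 * c * n ∧
      abs ((a + d) + 2 * c * n) ≥ 2 := by
  have hcpos : 0 < |c| := abs_pos.mpr hc
  have hkey : |a + d| + 2 < 2 * |c| := by
    have := (div_lt_iff₀ hcpos).mp hFord
    linarith
  have h1 : abs (a + d) - abs (2 * c) ≤ -2 := by
    rw [abs_mul]
    simp only [abs_two]
    linarith
  refine ⟨h1, fun n => ?_⟩
  have htr : Matrix.trace ((A ^ n * G : Matrix.SpecialLinearGroup (Fin 2) ℝ) :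
      Matrix (Fin 2) (Fin 2) ℝ) = (a + d) + 2 * c * n := by
    rw [Matrix.SpecialLinearGroup.coe_mul, pow_coe_aux A hA n, hGdef]
    simp [Matrix.trace_fin_two, Matrix.mul_apply, Fin.sum_univ_succ]
    ring
  refine ⟨htr, ?_⟩
  rcases eq_or_ne n 0 with rfl | hn
  · simpa using hG
  · have hn1 : (1 : ℝ) ≤ |(n : ℝ)| := by
      have : (1 : ℤ) ≤ |n| := Int.one_le_abs hn
      calc (1:ℝ) ≤ (|n| : ℤ) := by exact_mod_cast this
        _ = |(n : ℝ)| := by push_cast; rfl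
    have h2 : 2 * |c| ≤ |2 * c * n| := by
      rw [abs_mul, abs_mul, abs_two]
      nlinarith
    calc (2:ℝ) ≤ |2 * c * n| - |a + d| := by linarith
      _ ≤ |(a + d) + 2 * c * n| := by
          have := abs_sub_abs_le_abs_sub (2 * c * (n:ℝ)) (-(a + d))
          simp only [abs_neg] at this
          have h3 : 2 * c * (n:ℝ) - -(a + d) = (a + d) + 2 * c * n := by ring
          rw [h3] at this
          linarith
end

section
/- Let A = [[1,2],[0,1]], B = [[1,0],[-2/y,1]], C = [[1-2x/z, 2x²/z],[-2/z, 1+2x/z]] with y,z ≠ 0. Then replacing B by its conjugate B' = A·B·A⁻¹ leaves Tr(A), Tr(B'), Tr(C), Tr(A·B') unchanged compared with Tr(A), Tr(B), Tr(C), Tr(A·B), but Tr(B'·C) ≠ Tr(B·C) in general: explicitly Tr(B'C) = 2 - 4(x-2)²/(yz) while Tr(BC) = 2 - 4x²/(yz), so the traces differ whenever x ≠ 1. -/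
open Matrix

/-- Example 4.7 of the paper: replacing `B` by `B' = ABA⁻¹` leaves the traces of the
generators and of `A·B'` unchanged, but changes the trace of the product with `C`:
`Tr(B'C) = 2 - 4(x-2)²/(yz)` while `Tr(BC) = 2 - 4x²/(yz)`, and these differ
whenever `x ≠ 1`. -/
theorem stmt16 (x y z : ℝ) (hy : y ≠ 0) (hz : z ≠ 0)
    (A B C : Matrix (Fin 2) (Fin 2) ℝ)
    (hA : A = !![1, 2; 0, 1])
    (hB : B = !![1, 0; -2 / y, 1])
    (hC : C = !![1 - 2 * x / z, 2 * x ^ 2 / z; -2 / z, 1 + 2 * x / z]) :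
    Matrix.trace (A * B * A⁻¹) = Matrix.trace B ∧
    Matrix.trace (A * (A * B * A⁻¹)) = Matrix.trace (A * B) ∧
    Matrix.trace ((A * B * A⁻¹) * C) = 2 - 4 * (x - 2) ^ 2 / (y * z) ∧
    Matrix.trace (B * C) = 2 - 4 * x ^ 2 / (y * z) ∧
    (x ≠ 1 → Matrix.trace ((A * B * A⁻¹) * C) ≠ Matrix.trace (B * C)) := by
  have hAinv : A⁻¹ = !![1, -2; 0, 1] := by
    rw [hA, Matrix.inv_def]
    simp [Matrix.adjugate_fin_two, Matrix.det_fin_two_of]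
  subst hA hB hC
  rw [hAinv]
  have h3 : trace ((!![1, 2; 0, 1] * !![1, 0; -2 / y, 1] * !![1, -2; 0, 1]) * !![1 - 2 * x / z, 2 * x ^ 2 / z; -2 / z, 1 + 2 * x / z]) = 2 - 4 * (x - 2) ^ 2 / (y * z) := by
    simp only [Matrix.trace_fin_two, Matrix.mul_fin_two, Matrix.of_apply,
      Matrix.cons_val', Matrix.cons_val_zero, Matrix.cons_val_one, Matrix.head_cons,
      Matrix.head_fin_const, Matrix.empty_val', Matrix.cons_val_fin_one]
    field_simp; ring
  have h4 : trace (!![1, 0; -2 / y, 1] * !![1 - 2 * x / z, 2 * x ^ 2 / z; -2 / z, 1 + 2 * x / z]) = 2 - 4 * x ^ 2 / (y * z) := by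
    simp only [Matrix.trace_fin_two, Matrix.mul_fin_two, Matrix.of_apply,
      Matrix.cons_val', Matrix.cons_val_zero, Matrix.cons_val_one, Matrix.head_cons,
      Matrix.head_fin_const, Matrix.empty_val', Matrix.cons_val_fin_one]
    field_simp; ring
  refine ⟨?_, ?_, h3, h4, ?_⟩
  · simp only [Matrix.trace_fin_two, Matrix.mul_fin_two, Matrix.of_apply,
      Matrix.cons_val', Matrix.cons_val_zero, Matrix.cons_val_one, Matrix.head_cons,
      Matrix.head_fin_const, Matrix.empty_val', Matrix.cons_val_fin_one]
    ring
  · simp only [Matrix.trace_fin_two, Matrix.mul_fin_two, Matrix.of_apply,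
      Matrix.cons_val', Matrix.cons_val_zero, Matrix.cons_val_one, Matrix.head_cons,
      Matrix.head_fin_const, Matrix.empty_val', Matrix.cons_val_fin_one]
    ring
  · intro hx heq
    rw [h3, h4] at heq
    apply hx
    have hyz : y * z ≠ 0 := mul_ne_zero hy hz
    have h5 : 4 * (x - 2) ^ 2 / (y * z) = 4 * x ^ 2 / (y * z) := by linarith
    rw [div_eq_div_iff hyz hyz] at h5
    have h6 : (4 * (x - 2) ^ 2 - 4 * x ^ 2) * (y * z) = 0 := by ring_nf; nlinarith [h5]
    rcases mul_eq_zero.mp h6 with h | h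
    · nlinarith [h]
    · exact absurd h hyz
end
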